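/- The non-signalling value of the 3-fold parallel repetition of Feige's game equals 1/3: every non-signalling correlation p for G_F^{×3} has winning probability ω(p) ≤ 1/3, and there exists a non-signalling correlation for G_F^{×3} with winning probability exactly 1/3. -/

import Mathlib

open BigOperators

/-- `p` is a non-signalling correlation for the `3`-fold parallel repetition of Feige's game:
questions are tuples in `Fin 3 → Bool`, answers are tuples in `Fin 3 → Option Bool`
(`none` = `⊥`); `p` is nonnegative, normalized, and Alice's (resp. Bob's) marginals are
independent of Bob's (resp. Alice's) question. -/
def IsNSCorrelation3
    (p : (Fin 3 → Option Bool) → (Fin 3 → Option Bool) →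
         (Fin 3 → Bool) → (Fin 3 → Bool) → ℝ) : Prop :=
  (∀ a b x y, 0 ≤ p a b x y) ∧
  (∀ x y, ∑ a, ∑ b, p a b x y = 1) ∧
  (∀ b x x' y, ∑ a, p a b x y = ∑ a, p a b x' y) ∧
  (∀ a x y y', ∑ b, p a b x y = ∑ b, p a b x y')

/-- The winning probability of a correlation `p` for the `3`-fold parallel repetition: the
winning answer pairs for questions `(x, y)` are exactly `(a_I(y), b_I(x))` for subsets
`I ⊆ {1, 2, 3}`, where `(a_I(y))_i = ⊥` for `i ∈ I` and `y_i` otherwise, and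
`(b_I(x))_i = x_i` for `i ∈ I` and `⊥` otherwise. -/
noncomputable def nsWinProb3
    (p : (Fin 3 → Option Bool) → (Fin 3 → Option Bool) →
         (Fin 3 → Bool) → (Fin 3 → Bool) → ℝ) : ℝ :=
  (1 / 4 ^ 3 : ℝ) * ∑ x : Fin 3 → Bool, ∑ y : Fin 3 → Bool, ∑ I : Finset (Fin 3),
    p (fun i => if i ∈ I then none else some (y i))
      (fun i => if i ∈ I then some (x i) else none) x y

set_option maxRecDepth 100000

/-! ### Types of answers -/

def ty : Option Bool → Bool → Fin 3
  | none, _ => 0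
  | some v, y => if v = y then 1 else 2

def ity : Fin 3 → Bool → Option Bool := fun t y =>
  if t = 0 then none else if t = 1 then some y else some (!y)

lemma ty_none (u : Bool) : ty none u = 0 := rfl

lemma ity_ty : ∀ (y : Bool) (a : Option Bool), ity (ty a y) y = a := by decide
lemma ty_ity : ∀ (y : Bool) (t : Fin 3), ty (ity t y) y = t := by decide

def tyEquiv (y : Bool) : Option Bool ≃ Fin 3 where
  toFun a := ty a y
  invFun t := ity t y
  left_inv a := ity_ty y a
  right_inv t := ty_ity y t

def tvA (a : Fin 3 → Option Bool) (y : Fin 3 → Bool) : Fin 3 → Fin 3 :=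
  fun i => ty (a i) (y i)

def dec3 : Fin 27 → (Fin 3 → Fin 3) :=
  fun k i => ⟨k.val / 3 ^ i.val % 3, Nat.mod_lt _ (by norm_num)⟩

def decB : Fin 8 → (Fin 3 → Bool) := fun k i => k.val / 2 ^ i.val % 2 = 1

def decO : Fin 27 → (Fin 3 → Option Bool) := fun m i => ity (dec3 m i) false

lemma dec3_bij : Function.Bijective dec3 := by
  rw [Fintype.bijective_iff_injective_and_card]
  exact ⟨fun j k => by revert j k; decide, by simp⟩

lemma decB_bij : Function.Bijective decB := by
  rw [Fintype.bijective_iff_injective_and_card]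
  exact ⟨fun j k => by revert j k; decide, by simp⟩

lemma decO_bij : Function.Bijective decO := by
  rw [Fintype.bijective_iff_injective_and_card]
  exact ⟨fun j k => by revert j k; decide, by simp⟩

lemma forall_f (P : (Fin 3 → Fin 3) → Prop) (h : ∀ k, P (dec3 k)) (f : Fin 3 → Fin 3) :
    P f := by
  obtain ⟨k, rfl⟩ := dec3_bij.2 f; exact h k

lemma sum_dec3 {M : Type*} [AddCommMonoid M] (G : (Fin 3 → Fin 3) → M) :
    ∑ k : Fin 27, G (dec3 k) = ∑ f : Fin 3 → Fin 3, G f :=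
  Fintype.sum_bijective dec3 dec3_bij _ _ (fun _ => rfl)

lemma sum_decB {M : Type*} [AddCommMonoid M] (G : (Fin 3 → Bool) → M) :
    ∑ k : Fin 8, G (decB k) = ∑ x : Fin 3 → Bool, G x :=
  Fintype.sum_bijective decB decB_bij _ _ (fun _ => rfl)

lemma sum_tvA {M : Type*} [AddCommMonoid M] (y : Fin 3 → Bool)
    (G : (Fin 3 → Fin 3) → M) :
    ∑ a : Fin 3 → Option Bool, G (tvA a y) = ∑ k : Fin 27, G (dec3 k) := by
  rw [sum_dec3]
  exact Equiv.sum_comp (Equiv.piCongrRight fun i => tyEquiv (y i)) G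

/-! ### The optimal correlation -/

def code (f g : Fin 3 → Fin 3) (i : Fin 3) : ℕ := 3 * (f i).val + (g i).val

def cnt (f g : Fin 3 → Fin 3) (v : ℕ) : ℕ :=
  (if code f g 0 = v then 1 else 0) + (if code f g 1 = v then 1 else 0) +
  (if code f g 2 = v then 1 else 0)

def mu3 (f g : Fin 3 → Fin 3) : ℕ :=
  if (cnt f g 1 = 2 ∧ cnt f g 3 = 1) ∨ (cnt f g 1 = 1 ∧ cnt f g 3 = 2) then 2
  else if (cnt f g 0 = 1 ∧ cnt f g 2 = 1 ∧ cnt f g 7 = 1)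
       ∨ (cnt f g 0 = 1 ∧ cnt f g 5 = 1 ∧ cnt f g 6 = 1)
       ∨ (cnt f g 0 = 1 ∧ cnt f g 5 = 1 ∧ cnt f g 8 = 1)
       ∨ (cnt f g 0 = 1 ∧ cnt f g 7 = 1 ∧ cnt f g 8 = 1) then 1 else 0

noncomputable def pbox (a b : Fin 3 → Option Bool) (x y : Fin 3 → Bool) : ℝ :=
  (mu3 (tvA a y) (tvA b x) : ℝ) / 36

def MAn (g : Fin 3 → Fin 3) : ℕ := ∑ k : Fin 27, mu3 (dec3 k) g
def MBn (f : Fin 3 → Fin 3) : ℕ := ∑ k : Fin 27, mu3 f (dec3 k)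

def cnt1 (g : Fin 3 → Fin 3) (v : Fin 3) : ℕ :=
  (if g 0 = v then 1 else 0) + (if g 1 = v then 1 else 0) + (if g 2 = v then 1 else 0)

lemma MAn_pat : ∀ g, MAn g = (if cnt1 g 0 = 0 ∨ cnt1 g 0 = 3 then 0 else 2) :=
  forall_f _ (by decide)

lemma MBn_pat : ∀ g, MBn g = (if cnt1 g 0 = 0 ∨ cnt1 g 0 = 3 then 0 else 2) :=
  forall_f _ (by decide)

lemma cnt1_tvA (b : Fin 3 → Option Bool) (x x' : Fin 3 → Bool) :
    cnt1 (tvA b x) 0 = cnt1 (tvA b x') 0 := by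
  have h : ∀ (o : Option Bool) (u u' : Bool),
      (if ty o u = 0 then (1:ℕ) else 0) = (if ty o u' = 0 then 1 else 0) := by decide
  simp only [cnt1, tvA]
  exact congrArg₂ (· + ·) (congrArg₂ (· + ·) (h (b 0) (x 0) (x' 0)) (h (b 1) (x 1) (x' 1)))
    (h (b 2) (x 2) (x' 2))

lemma pbox_sum_a (b : Fin 3 → Option Bool) (x y : Fin 3 → Bool) :
    ∑ a, pbox a b x y = (MAn (tvA b x) : ℝ) / 36 := by
  have h := sum_tvA y (fun f => (mu3 f (tvA b x) : ℝ) / 36)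
  simp only [MAn, Nat.cast_sum, Finset.sum_div]
  exact h

lemma pbox_sum_b (a : Fin 3 → Option Bool) (x y : Fin 3 → Bool) :
    ∑ b, pbox a b x y = (MBn (tvA a y) : ℝ) / 36 := by
  have h := sum_tvA x (fun g => (mu3 (tvA a y) g : ℝ) / 36)
  simp only [MBn, Nat.cast_sum, Finset.sum_div]
  exact h

lemma pbox_ns : IsNSCorrelation3 pbox := by
  refine ⟨fun a b x y => by unfold pbox; positivity, ?_, ?_, ?_⟩
  · intro x y
    have hkey : (∑ k : Fin 27, MBn (dec3 k)) = 36 := by decide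
    calc ∑ a, ∑ b, pbox a b x y
        = ∑ a : Fin 3 → Option Bool, (MBn (tvA a y) : ℝ) / 36 := by
          simp only [pbox_sum_b]
      _ = ∑ k : Fin 27, (MBn (dec3 k) : ℝ) / 36 := sum_tvA y (fun f => (MBn f : ℝ) / 36)
      _ = ((∑ k : Fin 27, MBn (dec3 k) : ℕ) : ℝ) / 36 := by
          rw [Nat.cast_sum, Finset.sum_div]
      _ = 1 := by rw [hkey]; norm_num
  · intro b x x' y
    rw [pbox_sum_a, pbox_sum_a, MAn_pat, MAn_pat, cnt1_tvA b x x']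
  · intro a x y y'
    rw [pbox_sum_b, pbox_sum_b, MBn_pat, MBn_pat, cnt1_tvA a y y']

lemma pbox_win : nsWinProb3 pbox = 1 / 3 := by
  have hsum : (∑ I : Finset (Fin 3), mu3 (fun i => if i ∈ I then 0 else 1)
      (fun i => if i ∈ I then 1 else 0)) = 12 := by decide
  have hterm : ∀ (x y : Fin 3 → Bool) (I : Finset (Fin 3)),
      pbox (fun i => if i ∈ I then none else some (y i))
        (fun i => if i ∈ I then some (x i) else none) x y
      = (mu3 (fun i => if i ∈ I then 0 else 1)
          (fun i => if i ∈ I then 1 else 0) : ℝ) / 36 := by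
    intro x y I
    have h1 : tvA (fun i => if i ∈ I then none else some (y i)) y
        = fun i => if i ∈ I then 0 else 1 := by
      funext i; by_cases h : i ∈ I <;> simp [tvA, ty, h]
    have h2 : tvA (fun i => if i ∈ I then some (x i) else none) x
        = fun i => if i ∈ I then 1 else 0 := by
      funext i; by_cases h : i ∈ I <;> simp [tvA, ty, h]
    simp only [pbox, h1, h2]
  unfold nsWinProb3
  simp only [hterm]
  rw [show (∑ I : Finset (Fin 3), (mu3 (fun i => if i ∈ I then (0 : Fin 3) else 1)
      (fun i => if i ∈ I then 1 else 0) : ℝ) / 36) = 1/3 by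
    rw [← Finset.sum_div, ← Nat.cast_sum, hsum]; norm_num]
  simp only [Finset.sum_const, Finset.card_univ]
  norm_num

/-! ### The dual certificate -/

def certZ (g : Fin 3 → Fin 3) : ℤ :=
  if cnt1 g 0 = 0 ∧ cnt1 g 1 = 0 then 2
  else if cnt1 g 0 = 0 ∧ cnt1 g 1 = 3 then 4
  else if cnt1 g 0 = 1 ∧ cnt1 g 1 = 2 then 3
  else if cnt1 g 0 = 2 ∧ cnt1 g 1 = 1 then 1
  else if cnt1 g 0 = 3 ∧ cnt1 g 1 = 0 then 0
  else -1

lemma certZ_lb (f g : Fin 3 → Fin 3) : (0:ℤ) ≤ 2 + certZ f + certZ g := by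
  have base : ∀ j k : Fin 27, (0:ℤ) ≤ 2 + certZ (dec3 j) + certZ (dec3 k) := by decide
  obtain ⟨j, rfl⟩ := dec3_bij.2 f
  obtain ⟨k, rfl⟩ := dec3_bij.2 g
  exact base j k

lemma certZ_win (f g : Fin 3 → Fin 3)
    (h : ∀ i, (f i = 0 ∧ g i = 1) ∨ (f i = 1 ∧ g i = 0)) :
    (6:ℤ) ≤ 2 + certZ f + certZ g := by
  have base : ∀ j k : Fin 27,
      (∀ i, (dec3 j i = 0 ∧ dec3 k i = 1) ∨ (dec3 j i = 1 ∧ dec3 k i = 0)) →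
      (6:ℤ) ≤ 2 + certZ (dec3 j) + certZ (dec3 k) := by decide
  obtain ⟨j, rfl⟩ := dec3_bij.2 f
  obtain ⟨k, rfl⟩ := dec3_bij.2 g
  exact base j k h

lemma certZ_zero_sum (b : Fin 3 → Option Bool) :
    (∑ x : Fin 3 → Bool, certZ (tvA b x)) = 0 := by
  have base : ∀ m : Fin 27, (∑ k : Fin 8, certZ (tvA (decO m) (decB k))) = 0 := by decide
  obtain ⟨m, rfl⟩ := decO_bij.2 b
  rw [← sum_decB (fun x => certZ (tvA (decO m) x))]
  exact base m

lemma certZ_zero_sum_real (b : Fin 3 → Option Bool) :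
    (∑ x : Fin 3 → Bool, (certZ (tvA b x) : ℝ)) = 0 := by
  rw [← Int.cast_sum, certZ_zero_sum, Int.cast_zero]

/-! ### Winning predicate -/

def Wpred (a b : Fin 3 → Option Bool) (x y : Fin 3 → Bool) : Prop :=
  ∀ i, (a i = none ∧ b i = some (x i)) ∨ (a i = some (y i) ∧ b i = none)

instance (a b : Fin 3 → Option Bool) (x y : Fin 3 → Bool) : Decidable (Wpred a b x y) := by
  unfold Wpred; infer_instance

lemma stepA (p : (Fin 3 → Option Bool) → (Fin 3 → Option Bool) →
      (Fin 3 → Bool) → (Fin 3 → Bool) → ℝ)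
    (h0 : ∀ a b x y, 0 ≤ p a b x y) (x y : Fin 3 → Bool) :
    (∑ I : Finset (Fin 3),
      p (fun i => if i ∈ I then none else some (y i))
        (fun i => if i ∈ I then some (x i) else none) x y)
    ≤ ∑ a, ∑ b, (if Wpred a b x y then p a b x y else 0) := by
  classical
  set e : Finset (Fin 3) → (Fin 3 → Option Bool) × (Fin 3 → Option Bool) :=
    fun I => (fun i => if i ∈ I then none else some (y i),
              fun i => if i ∈ I then some (x i) else none) with he
  set F : (Fin 3 → Option Bool) × (Fin 3 → Option Bool) → ℝ :=
    fun z => if Wpred z.1 z.2 x y then p z.1 z.2 x y else 0 with hF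
  have hWin : ∀ I : Finset (Fin 3), Wpred (e I).1 (e I).2 x y := by
    intro I i
    by_cases h : i ∈ I
    · exact Or.inl ⟨if_pos h, if_pos h⟩
    · exact Or.inr ⟨if_neg h, if_neg h⟩
  have h1 : ∀ I : Finset (Fin 3),
      p (fun i => if i ∈ I then none else some (y i))
        (fun i => if i ∈ I then some (x i) else none) x y = F (e I) := by
    intro I
    simp only [hF, he]
    rw [if_pos (hWin I)]
  rw [Finset.sum_congr rfl fun I _ => h1 I]
  have hinj : ∀ I ∈ (Finset.univ : Finset (Finset (Fin 3))), ∀ J ∈ Finset.univ,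
      e I = e J → I = J := by
    intro I _ J _ h
    have h' : ∀ i, (if i ∈ I then (none : Option Bool) else some (y i))
        = (if i ∈ J then none else some (y i)) := fun i =>
      congrFun (congrArg Prod.fst h) i
    ext i
    constructor
    · intro hI
      by_contra hJ
      have hcf := h' i
      rw [if_pos hI, if_neg hJ] at hcf
      exact Option.some_ne_none _ hcf.symm
    · intro hJ
      by_contra hI
      have hcf := h' i
      rw [if_neg hI, if_pos hJ] at hcf
      exact Option.some_ne_none _ hcf
  rw [← Finset.sum_image hinj]
  have hle : ∑ z ∈ (Finset.univ.image e), F z ≤ ∑ z : (Fin 3 → Option Bool) × (Fin 3 → Option Bool), F z := by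
    refine Finset.sum_le_sum_of_subset_of_nonneg (Finset.subset_univ _) ?_
    intro z _ _
    simp only [hF]
    split
    · exact h0 _ _ _ _
    · exact le_refl 0
  refine hle.trans (le_of_eq ?_)
  rw [Fintype.sum_prod_type]

lemma stepB (p : (Fin 3 → Option Bool) → (Fin 3 → Option Bool) →
      (Fin 3 → Bool) → (Fin 3 → Bool) → ℝ)
    (h0 : ∀ a b x y, 0 ≤ p a b x y) (a b : Fin 3 → Option Bool) (x y : Fin 3 → Bool) :
    (if Wpred a b x y then p a b x y else 0)
      ≤ (1/3 + (certZ (tvA b x) : ℝ)/6 + (certZ (tvA a y) : ℝ)/6) * p a b x y := by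
  have hc : (0:ℝ) ≤ 1/3 + (certZ (tvA b x) : ℝ)/6 + (certZ (tvA a y) : ℝ)/6 := by
    have h := certZ_lb (tvA a y) (tvA b x)
    have h' : ((0:ℤ):ℝ) ≤ ((2 + certZ (tvA a y) + certZ (tvA b x) : ℤ):ℝ) :=
      Int.cast_le.mpr h
    push_cast at h'
    linarith
  split_ifs with hw
  · have hty : ∀ i, (tvA a y i = 0 ∧ tvA b x i = 1) ∨ (tvA a y i = 1 ∧ tvA b x i = 0) := by
      intro i
      rcases hw i with ⟨ha, hb⟩ | ⟨ha, hb⟩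
      · exact Or.inl ⟨by show ty (a i) (y i) = 0; rw [ha, ty_none],
          by show ty (b i) (x i) = 1; rw [hb]; simp [ty]⟩
      · exact Or.inr ⟨by show ty (a i) (y i) = 1; rw [ha]; simp [ty],
          by show ty (b i) (x i) = 0; rw [hb, ty_none]⟩
    have h6 := certZ_win _ _ hty
    have h1 : (1:ℝ) ≤ 1/3 + (certZ (tvA b x) : ℝ)/6 + (certZ (tvA a y) : ℝ)/6 := by
      have h' : ((6:ℤ):ℝ) ≤ ((2 + certZ (tvA a y) + certZ (tvA b x) : ℤ):ℝ) :=
        Int.cast_le.mpr h6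
      push_cast at h'
      linarith
    calc p a b x y = 1 * p a b x y := (one_mul _).symm
      _ ≤ _ := mul_le_mul_of_nonneg_right h1 (h0 a b x y)
  · exact mul_nonneg hc (h0 a b x y)

/-- The non-signalling value of the `3`-fold parallel repetition of Feige's game equals
`1/3`: every non-signalling correlation wins with probability at most `1/3`, and some
non-signalling correlation achieves exactly `1/3`. -/
theorem feige_three_fold_ns_value :
    (∀ p, IsNSCorrelation3 p → nsWinProb3 p ≤ 1 / 3)
    ∧ (∃ p, IsNSCorrelation3 p ∧ nsWinProb3 p = 1 / 3) := by
  constructor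
  · intro p hp
    obtain ⟨h0, hN, hA, hB⟩ := hp
    -- the big sum is at most 64/3
    have hS2 : ∀ y : Fin 3 → Bool,
        (∑ x : Fin 3 → Bool, ∑ a, ∑ b, ((certZ (tvA b x) : ℝ)/6) * p a b x y) = 0 := by
      intro y
      have h1 : ∀ x : Fin 3 → Bool,
          (∑ a, ∑ b, ((certZ (tvA b x) : ℝ)/6) * p a b x y)
          = ∑ b, (certZ (tvA b x) : ℝ) * ((∑ a, p a b (fun _ => false) y)/6) := by
        intro x
        rw [Finset.sum_comm]
        refine Finset.sum_congr rfl fun b _ => ?_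
        calc ∑ a, ((certZ (tvA b x) : ℝ)/6) * p a b x y
            = ((certZ (tvA b x) : ℝ)/6) * ∑ a, p a b x y := by rw [Finset.mul_sum]
          _ = ((certZ (tvA b x) : ℝ)/6) * ∑ a, p a b (fun _ => false) y := by
              rw [hA b x (fun _ => false) y]
          _ = (certZ (tvA b x) : ℝ) * ((∑ a, p a b (fun _ => false) y)/6) := by ring
      simp only [h1]
      rw [Finset.sum_comm]
      refine Finset.sum_eq_zero fun b _ => ?_
      rw [← Finset.sum_mul, certZ_zero_sum_real, zero_mul]
    have hS3 : ∀ x : Fin 3 → Bool,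
        (∑ y : Fin 3 → Bool, ∑ a, ∑ b, ((certZ (tvA a y) : ℝ)/6) * p a b x y) = 0 := by
      intro x
      have h1 : ∀ y : Fin 3 → Bool,
          (∑ a, ∑ b, ((certZ (tvA a y) : ℝ)/6) * p a b x y)
          = ∑ a, (certZ (tvA a y) : ℝ) * ((∑ b, p a b x (fun _ => false))/6) := by
        intro y
        refine Finset.sum_congr rfl fun a _ => ?_
        calc ∑ b, ((certZ (tvA a y) : ℝ)/6) * p a b x y
            = ((certZ (tvA a y) : ℝ)/6) * ∑ b, p a b x y := by rw [Finset.mul_sum]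
          _ = ((certZ (tvA a y) : ℝ)/6) * ∑ b, p a b x (fun _ => false) := by
              rw [hB a x y (fun _ => false)]
          _ = (certZ (tvA a y) : ℝ) * ((∑ b, p a b x (fun _ => false))/6) := by ring
      simp only [h1]
      rw [Finset.sum_comm]
      refine Finset.sum_eq_zero fun a _ => ?_
      rw [← Finset.sum_mul, certZ_zero_sum_real, zero_mul]
    have hS1 : ∀ x y : Fin 3 → Bool,
        (∑ a, ∑ b, (1/3 : ℝ) * p a b x y) = 1/3 := by
      intro x y
      simp only [← Finset.mul_sum]
      rw [hN x y, mul_one]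
    have split : ∀ x y : Fin 3 → Bool,
        (∑ a, ∑ b, (1/3 + (certZ (tvA b x) : ℝ)/6 + (certZ (tvA a y) : ℝ)/6) * p a b x y)
        = (∑ a, ∑ b, (1/3 : ℝ) * p a b x y)
          + (∑ a, ∑ b, ((certZ (tvA b x) : ℝ)/6) * p a b x y)
          + (∑ a, ∑ b, ((certZ (tvA a y) : ℝ)/6) * p a b x y) := by
      intro x y
      simp only [add_mul, Finset.sum_add_distrib]
    have chain : ∀ x y : Fin 3 → Bool,
        (∑ I : Finset (Fin 3),
          p (fun i => if i ∈ I then none else some (y i))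
            (fun i => if i ∈ I then some (x i) else none) x y)
        ≤ ∑ a, ∑ b, (1/3 + (certZ (tvA b x) : ℝ)/6 + (certZ (tvA a y) : ℝ)/6) * p a b x y :=
      fun x y => (stepA p h0 x y).trans
        (Finset.sum_le_sum fun a _ => Finset.sum_le_sum fun b _ => stepB p h0 a b x y)
    have total : (∑ x : Fin 3 → Bool, ∑ y : Fin 3 → Bool, ∑ I : Finset (Fin 3),
          p (fun i => if i ∈ I then none else some (y i))
            (fun i => if i ∈ I then some (x i) else none) x y) ≤ 64/3 := by
      have hle : (∑ x : Fin 3 → Bool, ∑ y : Fin 3 → Bool, ∑ I : Finset (Fin 3),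
            p (fun i => if i ∈ I then none else some (y i))
              (fun i => if i ∈ I then some (x i) else none) x y)
          ≤ ∑ x : Fin 3 → Bool, ∑ y : Fin 3 → Bool,
              ∑ a, ∑ b, (1/3 + (certZ (tvA b x) : ℝ)/6 + (certZ (tvA a y) : ℝ)/6)
                * p a b x y :=
        Finset.sum_le_sum fun x _ => Finset.sum_le_sum fun y _ => chain x y
      refine hle.trans (le_of_eq ?_)
      simp only [split, Finset.sum_add_distrib]
      have e1 : (∑ x : Fin 3 → Bool, ∑ y : Fin 3 → Bool, (∑ a, ∑ b, (1/3 : ℝ) * p a b x y))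
          = 64/3 := by
        simp only [hS1, Finset.sum_const, Finset.card_univ]
        norm_num
      have e2 : (∑ x : Fin 3 → Bool, ∑ y : Fin 3 → Bool,
            (∑ a, ∑ b, ((certZ (tvA b x) : ℝ)/6) * p a b x y)) = 0 := by
        rw [Finset.sum_comm]
        exact Finset.sum_eq_zero fun y _ => hS2 y
      have e3 : (∑ x : Fin 3 → Bool, ∑ y : Fin 3 → Bool,
            (∑ a, ∑ b, ((certZ (tvA a y) : ℝ)/6) * p a b x y)) = 0 := by
        exact Finset.sum_eq_zero fun x _ => hS3 x
      rw [e1, e2, e3]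
      ring
    unfold nsWinProb3
    have h64 : (1 / 4 ^ 3 : ℝ) = 1/64 := by norm_num
    rw [h64]
    linarith [total]
  · exact ⟨pbox, pbox_ns, pbox_win⟩
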